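/- Let p > 3 be a prime and let G = Φ₁₈(1⁶) be the group of order p⁶ with presentation on generators α, α₁, α₂, α₃, β, γ and relations [α₁,α] = α₂, [α₂,α] = α₃, [α₁,β] = α₃, [α,β] = γ, αᵖ = βᵖ = α₁ᵖ = α₂ᵖ = α₃ᵖ = γᵖ = 1, with every commutator of a pair of generators not listed among these relations declared trivial. Then the Bogomolov multiplier B₀(G) is nontrivial. -/

import Mathlib

/-!
Φ₁₈(1⁶): relations [α₁,α]=α₂, [α₂,α]=α₃, [α₁,β]=α₃, [α,β]=γ, all pth powers trivial.
The Bogomolov multiplier is nontrivial.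
-/

namespace Stmt18

/-- The additive group `ℚ/ℤ`. -/
abbrev QZ : Type := ℚ ⧸ AddSubgroup.zmultiples (1 : ℚ)

/-- An inhomogeneous 2-cocycle on `G` with values in `ℚ/ℤ` (trivial `G`-action). -/
def IsTwoCocycle {G : Type} [Group G] (f : G → G → QZ) : Prop :=
  ∀ g h j : G, f h j - f (g * h) j + f g (h * j) - f g h = 0

/-- An inhomogeneous 2-coboundary on `G` with values in `ℚ/ℤ` (trivial `G`-action). -/
def IsTwoCoboundary {G : Type} [Group G] (f : G → G → QZ) : Prop :=
  ∃ c : G → QZ, ∀ g h : G, f g h = c h - c (g * h) + c g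

/-- A subgroup is bicyclic if it is abelian and generated by at most two elements
(equivalently, cyclic or a direct product of two cyclic groups). -/
def IsBicyclic {G : Type} [Group G] (A : Subgroup G) : Prop :=
  (∀ x y : A, x * y = y * x) ∧ ∃ a b : G, A = Subgroup.closure {a, b}

/-- The Bogomolov multiplier `B₀(G) ⊆ H²(G, ℚ/ℤ)` is trivial, phrased at the level of
2-cocycles: every 2-cocycle whose restriction to each bicyclic subgroup is a coboundary
(i.e. whose class restricts to zero on each bicyclic subgroup) is itself a coboundary
(i.e. its class is zero). -/
def BogomolovMultiplierIsTrivial (G : Type) [Group G] : Prop :=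
  ∀ f : G → G → QZ, IsTwoCocycle f →
    (∀ A : Subgroup G, IsBicyclic A → IsTwoCoboundary (fun a b : ↥A => f ↑a ↑b)) →
    IsTwoCoboundary f

/-- The Bogomolov multiplier `B₀(G) ⊆ H²(G, ℚ/ℤ)` is nontrivial, phrased at the level of
2-cocycles. -/
def BogomolovMultiplierIsNontrivial (G : Type) [Group G] : Prop :=
  ∃ f : G → G → QZ, IsTwoCocycle f ∧
    (∀ A : Subgroup G, IsBicyclic A → IsTwoCoboundary (fun a b : ↥A => f ↑a ↑b)) ∧
    ¬ IsTwoCoboundary f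

/-- The generators. -/
inductive Gen | a | a1 | a2 | a3 | b | g

open FreeGroup

/-- The commutator `[x,y] = x⁻¹y⁻¹xy`. -/
def c (x y : FreeGroup Gen) : FreeGroup Gen := x⁻¹ * y⁻¹ * x * y

/-- The defining relators. -/
def rels (p : ℕ) : Set (FreeGroup Gen) :=
  { c (of .a1) (of .a) * (of Gen.a2)⁻¹,
    c (of .a2) (of .a) * (of Gen.a3)⁻¹,
    c (of .a1) (of .b) * (of Gen.a3)⁻¹,
    c (of .a) (of .b) * (of Gen.g)⁻¹,
    c (of .a) (of .a3),
    c (of .a) (of .g),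
    c (of .a1) (of .a2),
    c (of .a1) (of .a3),
    c (of .a1) (of .g),
    c (of .a2) (of .a3),
    c (of .a2) (of .b),
    c (of .a2) (of .g),
    c (of .a3) (of .b),
    c (of .a3) (of .g),
    c (of .b) (of .g),
    (of Gen.a) ^ p,
    (of Gen.a1) ^ p,
    (of Gen.a2) ^ p,
    (of Gen.a3) ^ p,
    (of Gen.b) ^ p,
    (of Gen.g) ^ p }

/-!
Let `f` be the pull-back of the `ℚ/ℤ`-valued cocycle `x, y ↦ (x.a1 * C(y.a, 2) + x.a2 * y.a) / p`
along the homomorphism from the presented group to its normal-form model `Phi18 (ZMod p)`.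

On commuting elements `f` is symmetric, and a symmetric `ℚ/ℤ`-valued cocycle on an abelian group is
a coboundary: the abelian extension it defines splits since `ℚ/ℤ` is injective. So `f` vanishes on
every abelian, in particular every bicyclic, subgroup.

If `f = δc` and `x y = y x z`, then `f x y - f y x - f (y x) z = -c z` depends only on `z`. But
`[α₂, α] = [α₁, β] = α₃`, and this defect is `1/p` for `(α₂, α)` and `0` for `(α₁, β)`.
-/

section Cocycles

variable {G : Type} [Group G] {f : G → G → QZ}

lemma IsTwoCocycle.comp {H : Type} [Group H] {f : H → H → QZ} (hf : IsTwoCocycle f)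
    (φ : G →* H) : IsTwoCocycle (fun x y => f (φ x) (φ y)) := by
  intro g h j
  have := hf (φ g) (φ h) (φ j)
  rwa [← _root_.map_mul, ← _root_.map_mul] at this

lemma IsTwoCocycle.apply_one_left (hf : IsTwoCocycle f) (y : G) : f 1 y = f 1 1 := by
  have h := hf 1 1 y
  rw [one_mul, one_mul] at h
  linear_combination (norm := abel) h

def commDefect {A : Type*} [AddCommGroup A] (f : G → G → A) (x y z : G) : A :=
  f x y - f y x - f (y * x) z

lemma IsTwoCoboundary.commDefect_eq (hf : IsTwoCoboundary f) {x y x' y' z : G}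
    (h : x * y = y * x * z) (h' : x' * y' = y' * x' * z) :
    commDefect f x y z = commDefect f x' y' z := by
  obtain ⟨c, hc⟩ := hf
  have key : ∀ u v : G, u * v = v * u * z → commDefect f u v z = -c z := by
    intro u v huv
    rw [commDefect, hc, hc, hc, ← huv]
    abel
  rw [key x y h, key x' y' h']

lemma commDefect_comp {G H A B : Type} [Group G] [Group H] [AddCommGroup A] [AddCommGroup B]
    (ψ : A →+ B) (φ : G →* H) (F : H → H → A) (x y z : G) :
    commDefect (fun u v => ψ (F (φ u) (φ v))) x y z = ψ (commDefect F (φ x) (φ y) (φ z)) := by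
  simp [commDefect]

end Cocycles

@[ext]
structure TwistedProd {H : Type} (f : H → H → QZ) where
  fst : QZ
  snd : H

namespace TwistedProd

variable {H : Type} [Group H] {f : H → H → QZ}

instance : Add (TwistedProd f) := ⟨fun u v => ⟨u.fst + v.fst + f u.snd v.snd, u.snd * v.snd⟩⟩

instance : Zero (TwistedProd f) := ⟨⟨-f 1 1, 1⟩⟩

instance : Neg (TwistedProd f) := ⟨fun u => ⟨-f 1 1 - u.fst - f u.snd⁻¹ u.snd, u.snd⁻¹⟩⟩

@[simp]
lemma add_fst (u v : TwistedProd f) : (u + v).fst = u.fst + v.fst + f u.snd v.snd := rfl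

@[simp]
lemma add_snd (u v : TwistedProd f) : (u + v).snd = u.snd * v.snd := rfl

@[simp]
lemma zero_fst : (0 : TwistedProd f).fst = -f 1 1 := rfl

@[simp]
lemma zero_snd : (0 : TwistedProd f).snd = 1 := rfl

@[simp]
lemma neg_fst (u : TwistedProd f) : (-u).fst = -f 1 1 - u.fst - f u.snd⁻¹ u.snd := rfl

@[simp]
lemma neg_snd (u : TwistedProd f) : (-u).snd = u.snd⁻¹ := rfl

abbrev addCommGroup (hcomm : ∀ x y : H, x * y = y * x) (hf : IsTwoCocycle f)
    (hs : ∀ x y, f x y = f y x) : AddCommGroup (TwistedProd f) :=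
  { AddGroup.ofLeftAxioms
      (fun u v w => by
        ext
        · simp only [add_fst, add_snd]
          linear_combination (norm := abel) -hf u.snd v.snd w.snd
        · exact mul_assoc _ _ _)
      (fun u => by
        ext
        · simp only [add_fst, zero_fst, zero_snd, hf.apply_one_left]
          abel
        · exact one_mul _)
      (fun u => by
        ext
        · simp only [add_fst, neg_fst, neg_snd, zero_fst]
          abel
        · exact inv_mul_cancel _) with
    add_comm := fun u v => by
      ext
      · simp only [add_fst, hs u.snd v.snd]
        abel
      · exact hcomm _ _ }

end TwistedProd

/-- `QZ` is divisible, hence injective: the extension `TwistedProd f` splits, and a splitting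
`r` gives the cochain `x ↦ r (0, x)`. -/
lemma isTwoCoboundary_of_comm {H : Type} [Group H] (hcomm : ∀ x y : H, x * y = y * x)
    {f : H → H → QZ} (hf : IsTwoCocycle f) (hs : ∀ x y, f x y = f y x) :
    IsTwoCoboundary f := by
  let _ := TwistedProd.addCommGroup hcomm hf hs
  let incl : QZ →+ TwistedProd f :=
    AddMonoidHom.mk' (fun q => ⟨q - f 1 1, 1⟩) fun q r => by
      ext
      · simp only [TwistedProd.add_fst]
        abel
      · exact (one_mul _).symm
  have incl_apply (q : QZ) : incl q = ⟨q - f 1 1, 1⟩ := rfl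
  have incl_inj : Function.Injective incl := fun q r h => by
    simpa [incl_apply] using congrArg TwistedProd.fst h
  obtain ⟨r, hr⟩ := (Module.Baer.of_divisible QZ).extension_property_addMonoidHom incl incl_inj
    (AddMonoidHom.id QZ)
  refine ⟨fun x => r ⟨0, x⟩, fun g h => ?_⟩
  have hsplit : (⟨0, g⟩ + ⟨0, h⟩ : TwistedProd f) = incl (f g h) + ⟨0, g * h⟩ := by
    ext
    · simp only [TwistedProd.add_fst, incl_apply, hf.apply_one_left]
      abel
    · exact (one_mul _).symm
  have hr' : r (incl (f g h)) = f g h := DFunLike.congr_fun hr (f g h)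
  have := congrArg r hsplit
  rw [map_add, map_add, hr'] at this
  linear_combination (norm := abel) -this

/-- `k ↦ k / n`. -/
noncomputable def ZMod.toQZ (n : ℕ) : ZMod n →+ QZ :=
  ZMod.lift n ⟨(QuotientAddGroup.mk' _).comp (zmultiplesHom ℚ (1 / n : ℚ)), by
    rw [AddMonoidHom.comp_apply, QuotientAddGroup.mk'_apply, QuotientAddGroup.eq_zero_iff]
    rcases eq_or_ne n 0 with rfl | hn
    · simp
    · simp [hn]⟩

lemma ZMod.toQZ_one_ne_zero {n : ℕ} (hn : 1 < n) : ZMod.toQZ n 1 ≠ 0 := by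
  rw [show (1 : ZMod n) = ((1 : ℤ) : ZMod n) from Int.cast_one.symm, ZMod.toQZ, ZMod.lift_coe]
  simp only [AddMonoidHom.comp_apply, zmultiplesHom_apply, QuotientAddGroup.mk'_apply, ne_eq,
    QuotientAddGroup.eq_zero_iff, AddSubgroup.mem_zmultiples_iff, zsmul_eq_mul, mul_one,
    Int.cast_one, one_mul]
  rintro ⟨k, hk⟩
  have hn' : (1 : ℚ) < n := by exact_mod_cast hn
  have hpos : (0 : ℚ) < k := hk ▸ by positivity
  have hlt : (k : ℚ) < 1 := hk ▸ (div_lt_one (by positivity)).mpr hn'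
  have : (0 : ℤ) < k := by exact_mod_cast hpos
  have : k < (1 : ℤ) := by exact_mod_cast hlt
  omega

lemma PresentedGroup.mk_mul_mk_of_c_mul_inv_mem {rels : Set (FreeGroup Gen)}
    {x y z : FreeGroup Gen} (h : c x y * z⁻¹ ∈ rels) :
    PresentedGroup.mk rels x * PresentedGroup.mk rels y =
      PresentedGroup.mk rels y * PresentedGroup.mk rels x * PresentedGroup.mk rels z := by
  have h := PresentedGroup.mk_eq_mk_of_mul_inv_mem h
  simp only [c, _root_.map_mul, _root_.map_inv] at h
  rw [← h]
  group

lemma mul_eq_mul_of_mul_eq_mul {R : Type*} [CommRing R] [NoZeroDivisors R]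
    {x₀ x₁ x₂ y₀ y₁ y₂ : R} (h₁ : x₁ * y₀ = y₁ * x₀) (h₂ : x₂ * y₀ = y₂ * x₀)
    (h₀ : x₀ ≠ 0 ∨ y₀ ≠ 0) : x₁ * y₂ = y₁ * x₂ := by
  rw [← sub_eq_zero]
  rcases h₀ with h₀ | h₀
  · refine (mul_eq_zero.mp ?_).resolve_left h₀
    linear_combination x₂ * h₁ - x₁ * h₂
  · refine (mul_eq_zero.mp ?_).resolve_left h₀
    linear_combination y₂ * h₁ - y₁ * h₂

/-- The element `α^a β^b α₁^a1 α₂^a2 α₃^a3 γ^g` of `Φ₁₈(1⁶)`, with exponents in a field. -/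
@[ext]
structure Phi18 (K : Type) where
  a : K
  b : K
  a1 : K
  a2 : K
  a3 : K
  g : K

namespace Phi18

variable {K : Type} [Field K]

instance : One (Phi18 K) := ⟨⟨0, 0, 0, 0, 0, 0⟩⟩

/-- Collecting `α₁^a1 α₂^a2` past `α^a' β^b'` with `[α₁, α] = α₂`, `[α₂, α] = α₃`,
`[α₁, β] = α₃`, `[α, β] = γ` produces the binomial coefficient `a' (a' - 1) / 2`. -/
instance : Mul (Phi18 K) :=
  ⟨fun x y => ⟨x.a + y.a, x.b + y.b, x.a1 + y.a1, x.a2 + y.a2 + x.a1 * y.a,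
    x.a3 + y.a3 + x.a1 * y.b + x.a1 * (y.a * (y.a - 1)) / 2 + x.a2 * y.a,
    x.g + y.g - x.b * y.a⟩⟩

instance : Inv (Phi18 K) :=
  ⟨fun x => ⟨-x.a, -x.b, -x.a1, -x.a2 + x.a1 * x.a,
    -x.a3 + x.a1 * x.b - x.a1 * (x.a * (x.a + 1)) / 2 + x.a2 * x.a, -x.g - x.b * x.a⟩⟩

lemma one_def : (1 : Phi18 K) = ⟨0, 0, 0, 0, 0, 0⟩ := rfl

lemma mul_def (x y : Phi18 K) : x * y =
    ⟨x.a + y.a, x.b + y.b, x.a1 + y.a1, x.a2 + y.a2 + x.a1 * y.a,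
    x.a3 + y.a3 + x.a1 * y.b + x.a1 * (y.a * (y.a - 1)) / 2 + x.a2 * y.a,
    x.g + y.g - x.b * y.a⟩ := rfl

lemma inv_def (x : Phi18 K) : x⁻¹ =
    ⟨-x.a, -x.b, -x.a1, -x.a2 + x.a1 * x.a,
    -x.a3 + x.a1 * x.b - x.a1 * (x.a * (x.a + 1)) / 2 + x.a2 * x.a, -x.g - x.b * x.a⟩ := rfl

/-- The `α₃`-component of the factor set of `Phi18 K` (read off from `mul_def`), minus the
bilinear term `x.a1 * y.b`. -/
def cocycle (x y : Phi18 K) : K :=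
  x.a1 * (y.a * (y.a - 1)) / 2 + x.a2 * y.a

lemma cocycle_comm {x y : Phi18 K} (h : x * y = y * x) : cocycle x y = cocycle y x := by
  rw [mul_def, mul_def, mk.injEq] at h
  obtain ⟨-, -, -, ha2, ha3, hg⟩ := h
  by_cases ha : x.a = 0 ∧ y.a = 0
  · simp [cocycle, ha.1, ha.2]
  have hb : x.a1 * y.b = y.a1 * x.b :=
    mul_eq_mul_of_mul_eq_mul (x₀ := x.a) (y₀ := y.a) (by linear_combination ha2)
      (by linear_combination -hg) (not_and_or.mp ha)
  unfold cocycle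
  linear_combination ha3 - hb

variable [NeZero (2 : K)]

instance : Group (Phi18 K) :=
  Group.ofLeftAxioms
    (fun x y z => by
      simp only [mul_def, mk.injEq]
      refine ⟨by ring, by ring, by ring, by ring, ?_, by ring⟩
      field_simp
      ring)
    (fun x => by ext <;> simp [one_def, mul_def])
    (fun x => by
      simp only [inv_def, mul_def, one_def, mk.injEq]
      refine ⟨by ring, by ring, by ring, by ring, ?_, by ring⟩
      field_simp
      ring)

def gen : Gen → Phi18 K
  | .a => ⟨1, 0, 0, 0, 0, 0⟩
  | .b => ⟨0, 1, 0, 0, 0, 0⟩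
  | .a1 => ⟨0, 0, 1, 0, 0, 0⟩
  | .a2 => ⟨0, 0, 0, 1, 0, 0⟩
  | .a3 => ⟨0, 0, 0, 0, 1, 0⟩
  | .g => ⟨0, 0, 0, 0, 0, 1⟩

lemma gen_pow (s : Gen) (n : ℕ) : (gen s : Phi18 K) ^ n =
    ⟨n * (gen s).a, n * (gen s).b, n * (gen s).a1, n * (gen s).a2, n * (gen s).a3,
      n * (gen s).g⟩ := by
  induction n with
  | zero => simp [one_def]
  | succ n ih =>
    rw [pow_succ, ih]
    cases s <;> simp only [gen, mul_def, mk.injEq] <;> push_cast <;> ring_nf <;> simp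

lemma gen_pow_char (p : ℕ) [CharP K p] (s : Gen) : (gen s : Phi18 K) ^ p = 1 := by
  simp [gen_pow, one_def]

lemma lift_gen_rels (p : ℕ) [CharP K p] :
    ∀ r ∈ rels p, FreeGroup.lift (gen (K := K)) r = 1 := by
  intro r hr
  simp only [rels, Set.mem_insert_iff, Set.mem_singleton_iff] at hr
  rcases hr with rfl | rfl | rfl | rfl | rfl | rfl | rfl | rfl | rfl | rfl | rfl | rfl | rfl |
    rfl | rfl | rfl | rfl | rfl | rfl | rfl | rfl <;>
    simp only [c, _root_.map_mul, _root_.map_inv, _root_.map_pow, FreeGroup.lift_apply_of,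
      gen_pow_char] <;>
    simp only [gen, inv_def, mul_def, one_def, mk.injEq] <;>
    norm_num [neg_div, div_self (two_ne_zero (α := K))]

lemma cocycle_sub_add_sub (x y z : Phi18 K) :
    cocycle y z - cocycle (x * y) z + cocycle x (y * z) - cocycle x y = 0 := by
  simp only [cocycle, mul_def]
  field_simp
  ring

lemma isTwoCocycle_cocycle (ψ : K →+ QZ) : IsTwoCocycle fun x y : Phi18 K => ψ (cocycle x y) := by
  intro x y z
  rw [← map_sub, ← map_add, ← map_sub, cocycle_sub_add_sub, map_zero]

lemma commDefect_cocycle_gen_a2_a :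
    commDefect cocycle (gen .a2 : Phi18 K) (gen .a) (gen .a3) = 1 := by
  simp [commDefect, cocycle, gen, mul_def]

lemma commDefect_cocycle_gen_a1_b :
    commDefect cocycle (gen .a1 : Phi18 K) (gen .b) (gen .a3) = 0 := by
  simp [commDefect, cocycle, gen, mul_def]

end Phi18

theorem bogomolov_nontrivial_Phi18_general (p : ℕ) (hp : p.Prime) (h3 : 3 < p) :
    BogomolovMultiplierIsNontrivial (PresentedGroup (rels p)) := by
  have : Fact p.Prime := ⟨hp⟩
  have : NeZero (2 : ZMod p) := ⟨Ring.two_ne_zero (by rw [ZMod.ringChar_zmod_n]; omega)⟩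
  let φ : PresentedGroup (rels p) →* Phi18 (ZMod p) :=
    PresentedGroup.toGroup (Phi18.lift_gen_rels p)
  have φ_of (s : Gen) : φ (PresentedGroup.mk _ (of s)) = Phi18.gen s := PresentedGroup.toGroup.of _
  refine ⟨fun x y => ZMod.toQZ p (Phi18.cocycle (φ x) (φ y)),
    (Phi18.isTwoCocycle_cocycle _).comp φ, fun A hA => ?_, fun hcob => ?_⟩
  · refine isTwoCoboundary_of_comm hA.1 ((Phi18.isTwoCocycle_cocycle _).comp (φ.comp A.subtype))
      fun x y => congrArg _ (Phi18.cocycle_comm ?_)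
    rw [← _root_.map_mul, ← _root_.map_mul]
    exact congrArg (fun u : A => φ u) (hA.1 x y)
  · have h := hcob.commDefect_eq
      (PresentedGroup.mk_mul_mk_of_c_mul_inv_mem (x := of .a2) (y := of .a) (z := of .a3)
        (by simp [rels]))
      (PresentedGroup.mk_mul_mk_of_c_mul_inv_mem (x := of .a1) (y := of .b) (z := of .a3)
        (by simp [rels]))
    rw [commDefect_comp (F := Phi18.cocycle), commDefect_comp (F := Phi18.cocycle)] at h
    simp only [φ_of, Phi18.commDefect_cocycle_gen_a2_a,
      Phi18.commDefect_cocycle_gen_a1_b, map_zero] at h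
    exact ZMod.toQZ_one_ne_zero hp.one_lt h

theorem bogomolov_nontrivial_Phi18 (p : ℕ) (hp : p.Prime) (h3 : 3 < p)
    (hcard : Nat.card (PresentedGroup (rels p)) = p ^ 6) :
    BogomolovMultiplierIsNontrivial (PresentedGroup (rels p)) :=
  bogomolov_nontrivial_Phi18_general p hp h3

end Stmt18
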